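/- Let σ be a d × d diagonal density matrix (d ≥ 2) whose largest diagonal entry σ_{i₁ i₁} satisfies σ_{i₁ i₁} ≥ 3/4, and let i₂ ≠ i₁ be any other index. Fix 0 < ε ≤ 1/2 and u ∈ {+1, −1}, and let σ^u be the Hermitian matrix that agrees with σ everywhere except on the principal 2 × 2 submatrix indexed by {i₁, i₂}, where σ^u_{i₁ i₁} = σ_{i₁ i₁} − ε², σ^u_{i₂ i₂} = σ_{i₂ i₂} + ε², and σ^u_{i₁ i₂} = σ^u_{i₂ i₁} = (ε/2)·u. Then ‖σ − σ^u‖₁ ≥ ε and σ^u is a density matrix (positive semidefinite with trace 1). -/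

import Mathlib

open Matrix ComplexOrder

/-- The trace norm (Schatten-1 norm) of a complex matrix: `‖M‖₁ = Tr √(Mᴴ M)`. -/
noncomputable def traceNorm {m n : Type*} [Fintype m] [Fintype n] [DecidableEq n]
    (B : Matrix m n ℂ) : ℝ :=
  (((Matrix.posSemidef_conjTranspose_mul_self B).1.eigenvectorUnitary : Matrix n n ℂ) *
    Matrix.diagonal (((↑) : ℝ → ℂ) ∘ (√·) ∘ (Matrix.posSemidef_conjTranspose_mul_self B).1.eigenvalues) *
    (star (Matrix.posSemidef_conjTranspose_mul_self B).1.eigenvectorUnitary : Matrix n n ℂ)).trace.re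

/-!
`σ - σᵘ` is `a Z + b X` placed on the coordinates `i₁, i₂`, with `a = ε²` and `b = -εu/2`.
It squares to `(a² + b²)` times the projection onto those coordinates, so its trace norm is
`2 √(a² + b²) ≥ 2|b| = ε`. Positivity of `σᵘ` comes from writing it as a nonnegative
diagonal matrix plus the rank-one `v vᴴ` with `v = eᵢ₁ / 2 + εu eᵢ₂`; this uses
`σᵢ₁ᵢ₁ ≥ 3/4 ≥ 1/4 + ε²`. The trace is preserved because `Z` is traceless.
-/

open scoped MatrixOrder in
lemma traceNorm_eq_re_trace_of_mul_self {m n : Type*} [Fintype m] [Fintype n] [DecidableEq n]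
    {B : Matrix m n ℂ} {S : Matrix n n ℂ} (hS : S.PosSemidef) (h : S * S = Bᴴ * B) :
    traceNorm B = S.trace.re := by
  have hB := posSemidef_conjTranspose_mul_self B
  have hcfc : traceNorm B = (hB.1.cfc Real.sqrt).trace.re := rfl
  rw [hcfc, ← hB.1.cfc_eq, ← cfcₙ_eq_cfc, ← CFC.sqrt_eq_real_sqrt _ hB.nonneg, ← h,
    CFC.sqrt_mul_self S hS.nonneg]

namespace Matrix

variable {n : Type*} [DecidableEq n]

/-- The matrix `a Z + b X` (Pauli matrices) on the coordinate plane spanned by `i` and `j`. -/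
def pauliBlock (i j : n) (a b : ℝ) : Matrix n n ℂ :=
  single i i (a : ℂ) - single j j (a : ℂ) + single i j (b : ℂ) + single j i (b : ℂ)

lemma pauliBlock_isHermitian (i j : n) (a b : ℝ) : (pauliBlock i j a b).IsHermitian := by
  simp only [IsHermitian, pauliBlock, conjTranspose_add, conjTranspose_sub, conjTranspose_single,
    Complex.star_def, Complex.conj_ofReal]
  abel

lemma posSemidef_single_self (i : n) {c : ℂ} (hc : 0 ≤ c) : (single i i c).PosSemidef := by
  rw [← diagonal_single]
  exact posSemidef_diagonal_iff.mpr (Pi.single_nonneg.mpr hc)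

variable [Fintype n]

lemma trace_pauliBlock {i j : n} (hij : i ≠ j) (a b : ℝ) : (pauliBlock i j a b).trace = 0 := by
  simp [pauliBlock, trace_single_eq_of_ne, hij, hij.symm]

lemma pauliBlock_mul_self {i j : n} (hij : i ≠ j) (a b : ℝ) :
    pauliBlock i j a b * pauliBlock i j a b =
      single i i ((a ^ 2 + b ^ 2 : ℝ) : ℂ) + single j j ((a ^ 2 + b ^ 2 : ℝ) : ℂ) := by
  simp only [pauliBlock, add_mul, mul_add, sub_mul, mul_sub, single_mul_single_same,
    single_mul_single_of_ne, hij, hij.symm, ne_eq, not_false_eq_true, sub_zero, zero_sub,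
    add_zero]
  push_cast [sq, single_add, mul_comm (b : ℂ) a]
  abel

lemma traceNorm_pauliBlock {i j : n} (hij : i ≠ j) (a b : ℝ) :
    traceNorm (pauliBlock i j a b) = 2 * √(a ^ 2 + b ^ 2) := by
  set c := √(a ^ 2 + b ^ 2)
  have hc : 0 ≤ (c : ℂ) := Complex.zero_le_real.mpr (Real.sqrt_nonneg _)
  have hcc : (c : ℂ) * c = ((a ^ 2 + b ^ 2 : ℝ) : ℂ) := by
    rw [← Complex.ofReal_mul, Real.mul_self_sqrt (by positivity)]
  rw [traceNorm_eq_re_trace_of_mul_self (S := single i i (c : ℂ) + single j j (c : ℂ))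
    ((posSemidef_single_self i hc).add (posSemidef_single_self j hc))]
  · simp only [trace_add, trace_single_eq_same, Complex.add_re, Complex.ofReal_re]
    ring
  · rw [(pauliBlock_isHermitian i j a b).eq, pauliBlock_mul_self hij]
    simp [add_mul, mul_add, hij, hij.symm, hcc]

lemma posSemidef_diagonal_sub_pauliBlock {i j : n} (hij : i ≠ j) {lam : n → ℝ}
    (hlam : ∀ k, 0 ≤ lam k) {a b : ℝ} (x y : ℝ) (hxy : x * y = -b) (hi : x ^ 2 + a ≤ lam i)
    (hj : y ^ 2 ≤ lam j + a) :
    (diagonal (fun k => (lam k : ℂ)) - pauliBlock i j a b).PosSemidef := by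
  set ν : n → ℝ := lam - Pi.single i (x ^ 2 + a) - Pi.single j (y ^ 2 - a)
  set v : n → ℂ := Pi.single i (x : ℂ) + Pi.single j (y : ℂ)
  have hν : ∀ k, 0 ≤ ν k := by
    intro k
    by_cases hki : k = i <;> by_cases hkj : k = j <;> simp_all [ν]
  have hxyC : (x : ℂ) * y = -b := by exact_mod_cast hxy
  have hsplit : diagonal (fun k => (lam k : ℂ)) - pauliBlock i j a b =
      diagonal (fun k => (ν k : ℂ)) + vecMulVec v (star v) := by
    ext k l
    simp only [pauliBlock, sub_apply, add_apply, diagonal_apply, single_apply, vecMulVec_apply,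
      Pi.star_apply, Complex.star_def, ν, v, Pi.sub_apply, Pi.add_apply, Pi.single_apply]
    by_cases hki : k = i <;> by_cases hkj : k = j <;> by_cases hli : l = i <;>
      by_cases hlj : l = j <;> simp_all [eq_comm] <;>
      first | ring1 | linear_combination hxyC
  rw [hsplit]
  exact (posSemidef_diagonal_iff.mpr fun k => Complex.zero_le_real.mpr (hν k)).add
    (posSemidef_vecMulVec_self_star v)

end Matrix

theorem corner_perturbation_valid_general
    {d : ℕ} (lam : Fin d → ℝ) (hnn : ∀ i, 0 ≤ lam i) (hsum1 : ∑ i, lam i = 1)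
    (i₁ i₂ : Fin d) (hne : i₂ ≠ i₁)
    (hbig : 3 / 4 ≤ lam i₁)
    (ε : ℝ) (hε : 0 < ε) (hεle : ε ≤ 1 / 2)
    (u : ℝ) (hu : u = 1 ∨ u = -1)
    (σ σu : Matrix (Fin d) (Fin d) ℂ)
    (hσ : σ = Matrix.diagonal (fun i => (lam i : ℂ)))
    (hσu : ∀ a b : Fin d, σu a b =
      if a = i₁ ∧ b = i₁ then ((lam i₁ - ε ^ 2 : ℝ) : ℂ)
      else if a = i₂ ∧ b = i₂ then ((lam i₂ + ε ^ 2 : ℝ) : ℂ)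
      else if (a = i₁ ∧ b = i₂) ∨ (a = i₂ ∧ b = i₁) then ((ε / 2 * u : ℝ) : ℂ)
      else σ a b) :
    ε ≤ traceNorm (σ - σu) ∧ σu.PosSemidef ∧ σu.trace = 1 := by
  have hu2 : u ^ 2 = 1 := by rcases hu with rfl | rfl <;> norm_num
  subst hσ
  have hσu' : σu = diagonal (fun i => (lam i : ℂ)) - pauliBlock i₁ i₂ (ε ^ 2) (-(ε / 2 * u)) := by
    ext a b
    rw [hσu]
    simp only [Matrix.sub_apply, pauliBlock, Matrix.add_apply, diagonal_apply, single_apply]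
    clear hσu
    by_cases ha1 : a = i₁ <;> by_cases ha2 : a = i₂ <;> by_cases hb1 : b = i₁ <;>
      by_cases hb2 : b = i₂ <;> simp_all [eq_comm]
  refine ⟨?_, ?_, ?_⟩
  · rw [hσu', sub_sub_cancel, traceNorm_pauliBlock hne.symm]
    have : ε / 2 ≤ √((ε ^ 2) ^ 2 + (-(ε / 2 * u)) ^ 2) :=
      (Real.le_sqrt (by positivity) (by positivity)).mpr (by nlinarith)
    linarith
  · rw [hσu']
    exact posSemidef_diagonal_sub_pauliBlock hne.symm hnn (1 / 2) (ε * u) (by ring)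
      (by nlinarith) (by nlinarith [hnn i₂])
  · rw [hσu', trace_sub, trace_pauliBlock hne.symm, trace_diagonal, sub_zero]
    exact_mod_cast hsum1

/-- (Corner-case perturbation.) If the largest diagonal entry of
a diagonal density matrix `σ` is at least `3/4`, then for `0 < ε ≤ 1/2` and
`u ∈ {+1, −1}`, the perturbation `σ^u` (shifting `∓ε²` on the two diagonal entries
`i₁, i₂` and putting `(ε/2)u` on the off-diagonal pair) is a density matrix that
is `ε`-far from `σ` in trace norm. -/
theorem corner_perturbation_valid
    {d : ℕ} (lam : Fin d → ℝ) (hnn : ∀ i, 0 ≤ lam i) (hsum1 : ∑ i, lam i = 1)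
    (i₁ i₂ : Fin d) (hne : i₂ ≠ i₁)
    (hmax : ∀ i, lam i ≤ lam i₁) (hbig : 3 / 4 ≤ lam i₁)
    (ε : ℝ) (hε : 0 < ε) (hεle : ε ≤ 1 / 2)
    (u : ℝ) (hu : u = 1 ∨ u = -1)
    (σ σu : Matrix (Fin d) (Fin d) ℂ)
    (hσ : σ = Matrix.diagonal (fun i => (lam i : ℂ)))
    (hσu : ∀ a b : Fin d, σu a b =
      if a = i₁ ∧ b = i₁ then ((lam i₁ - ε ^ 2 : ℝ) : ℂ)
      else if a = i₂ ∧ b = i₂ then ((lam i₂ + ε ^ 2 : ℝ) : ℂ)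
      else if (a = i₁ ∧ b = i₂) ∨ (a = i₂ ∧ b = i₁) then ((ε / 2 * u : ℝ) : ℂ)
      else σ a b) :
    ε ≤ traceNorm (σ - σu) ∧ σu.PosSemidef ∧ σu.trace = 1 :=
  corner_perturbation_valid_general lam hnn hsum1 i₁ i₂ hne hbig ε hε hεle u hu σ σu hσ hσu
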